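/- arXiv:1502.04541 — 3 statements merged into one kernel-verified Lean document; each statement's English description precedes it below -/
import Mathlib

section
/- Fix integers m ≥ 1 and α ≥ m, and let z > 0. Then the series ∑_{k ∈ ℤ^m} (k₁² + ⋯ + k_m² + z²)^{−α} converges absolutely, and lim_{n→∞} ∑_{k ∈ {0,…,n−1}^m} (ω(n,k) + z²)^{−α} = ∑_{k ∈ ℤ^m} (k₁² + ⋯ + k_m² + z²)^{−α}. -/
/-!
Replacing `kᵢ` by `kᵢ - n` whenever `2 kᵢ > n` does not change `ω(n, k)`, so the discrete sum is
a sum over the lattice points of the centred box `(-n/2, n/2]^m`. For a fixed lattice point,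
`(n/π) sin(π kᵢ/n) → kᵢ`; on the box, Jordan's inequality `sin x ≥ 2x/π` on `[0, π/2]` gives
`ω(n, k) ≥ (2/π)² |k|²`, so the terms are dominated by `(π/2)^{2α} (|k|² + z²)^{-α}`. This series
converges because `(|k|² + z²)^{-α} ≤ z^{-2(α-m)} ∏ᵢ (kᵢ² + z²)⁻¹` for `α ≥ m`, and Tannery's
theorem (dominated convergence for series) concludes.
-/

open Real Filter Topology Finset

lemma summable_inv_sq_add {c : ℝ} (hc : 0 ≤ c) : Summable fun k : ℤ => ((k : ℝ) ^ 2 + c)⁻¹ := by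
  refine Summable.of_norm_bounded_eventually (summable_one_div_int_pow.2 one_lt_two) ?_
  filter_upwards [eventually_cofinite_ne 0] with k hk
  rw [Real.norm_of_nonneg (by positivity), one_div]
  exact inv_anti₀ (by positivity) (le_add_of_nonneg_right hc)

lemma summable_prod_apply_of_nonneg {β : Type*} {f : β → ℝ} (hf₀ : 0 ≤ f) (hf : Summable f) :
    ∀ m : ℕ, Summable fun k : Fin m → β => ∏ i, f (k i)
  | 0 => .of_finite
  | m + 1 => by
    refine (Fin.consEquiv fun _ => β).summable_iff.1 ?_
    refine (hf.mul_of_nonneg (summable_prod_apply_of_nonneg hf₀ hf m) hf₀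
      fun k => prod_nonneg fun i _ => hf₀ (k i)).congr fun p => ?_
    simp [Fin.consEquiv, Fin.prod_univ_succ]

lemma prod_sq_add_le_pow {ι : Type*} [Fintype ι] (x : ι → ℝ) {c : ℝ} (hc : 0 ≤ c) :
    ∏ i, (x i ^ 2 + c) ≤ (∑ i, x i ^ 2 + c) ^ Fintype.card ι := by
  rw [← card_univ, ← prod_const]
  gcongr with i
  exact single_le_sum (fun j _ => sq_nonneg (x j)) (mem_univ i)

theorem summable_sum_sq_add_zpow_neg {m α : ℕ} (hα : m ≤ α) {c : ℝ} (hc : 0 < c) :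
    Summable fun k : Fin m → ℤ => (∑ i, (k i : ℝ) ^ 2 + c) ^ (-(α : ℤ)) := by
  refine .of_nonneg_of_le (fun k => by positivity) (fun k => ?_)
    ((summable_prod_apply_of_nonneg (fun _ => by positivity) (summable_inv_sq_add hc.le) m).mul_left
      (c ^ (α - m))⁻¹)
  set S := ∑ i, (k i : ℝ) ^ 2
  have hS : 0 ≤ S := sum_nonneg fun i _ => sq_nonneg _
  calc (S + c) ^ (-(α : ℤ)) = ((S + c) ^ m * (S + c) ^ (α - m))⁻¹ := by
        rw [← pow_add, Nat.add_sub_cancel' hα, zpow_neg, zpow_natCast]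
    _ ≤ ((∏ i, ((k i : ℝ) ^ 2 + c)) * c ^ (α - m))⁻¹ := by
        refine inv_anti₀ (by positivity) (mul_le_mul ?_ ?_ (by positivity) (by positivity))
        · simpa using prod_sq_add_le_pow (fun i => (k i : ℝ)) hc.le
        · exact pow_le_pow_left₀ hc.le (by linarith) _
    _ = (c ^ (α - m))⁻¹ * ∏ i, ((k i : ℝ) ^ 2 + c)⁻¹ := by
        rw [mul_inv, prod_inv_distrib, mul_comm]

lemma tendsto_natCast_div_pi_mul_sin (a : ℝ) :
    Tendsto (fun n : ℕ => n / π * sin (π * a / n)) atTop (𝓝 a) := by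
  have hsinc : Tendsto (fun n : ℕ => a * sinc (π * a / n)) atTop (𝓝 a) := by
    simpa using ((continuous_sinc.tendsto 0).comp
      (tendsto_const_div_atTop_nhds_zero_nat (π * a))).const_mul a
  refine hsinc.congr' ?_
  filter_upwards [eventually_ne_atTop 0] with n hn
  rcases eq_or_ne a 0 with rfl | ha
  · simp
  · rw [sinc_of_ne_zero (by positivity)]
    field_simp

lemma sq_two_div_pi_mul_le_sq_mul_sin {a t : ℝ} (ha : 2 * |a| ≤ t) :
    (2 / π * a) ^ 2 ≤ (t / π * sin (π * a / t)) ^ 2 := by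
  rcases eq_or_ne a 0 with rfl | ha₀
  · simp
  have ht : 0 < t := by linarith [abs_pos.2 ha₀]
  have hy : |π * a / t| = π / t * |a| := by
    rw [abs_div, abs_mul, abs_of_pos pi_pos, abs_of_pos ht]; ring
  have hjordan : 2 / π * |π * a / t| ≤ |sin (π * a / t)| := mul_abs_le_abs_sin <| by
    rw [hy, div_mul_eq_mul_div, div_le_div_iff₀ ht two_pos]; nlinarith [pi_pos]
  rw [sq_le_sq, abs_mul, abs_mul, abs_of_pos (by positivity : 0 < 2 / π),
    abs_of_pos (by positivity : 0 < t / π)]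
  calc 2 / π * |a| = t / π * (2 / π * |π * a / t|) := by rw [hy]; field_simp
    _ ≤ t / π * |sin (π * a / t)| := by gcongr

lemma sin_sq_pi_mul_sub_div_self (a t : ℝ) : sin (π * (a - t) / t) ^ 2 = sin (π * a / t) ^ 2 := by
  rcases eq_or_ne t 0 with rfl | ht
  · simp
  · rw [show π * (a - t) / t = π * a / t - π by field_simp, sin_sub_pi, neg_sq]

section TorusEigenvalue

variable {ι : Type*} [Fintype ι]

/-- `ω(n, x)`. -/
noncomputable def torusEigenvalue (n : ℕ) (x : ι → ℝ) : ℝ :=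
  (n : ℝ) ^ 2 / π ^ 2 * ∑ i, sin (π * x i / n) ^ 2

lemma torusEigenvalue_eq_sum_sq (n : ℕ) (x : ι → ℝ) :
    torusEigenvalue n x = ∑ i, ((n : ℝ) / π * sin (π * x i / n)) ^ 2 := by
  simp only [torusEigenvalue, mul_sum, mul_pow, div_pow]

lemma torusEigenvalue_nonneg (n : ℕ) (x : ι → ℝ) : 0 ≤ torusEigenvalue n x := by
  rw [torusEigenvalue_eq_sum_sq]
  positivity

lemma tendsto_torusEigenvalue (x : ι → ℝ) :
    Tendsto (fun n => torusEigenvalue n x) atTop (𝓝 (∑ i, x i ^ 2)) := by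
  simp only [torusEigenvalue_eq_sum_sq]
  exact tendsto_finsetSum _ fun i _ => (tendsto_natCast_div_pi_mul_sin (x i)).pow 2

lemma sq_two_div_pi_mul_sum_le_torusEigenvalue {n : ℕ} {x : ι → ℝ} (hx : ∀ i, 2 * |x i| ≤ n) :
    (2 / π) ^ 2 * ∑ i, x i ^ 2 ≤ torusEigenvalue n x := by
  rw [torusEigenvalue_eq_sum_sq, mul_sum]
  exact sum_le_sum fun i _ => (mul_pow _ _ 2).symm.trans_le (sq_two_div_pi_mul_le_sq_mul_sin (hx i))

lemma torusEigenvalue_add_zpow_neg_le {n : ℕ} {x : ι → ℝ} (hx : ∀ i, 2 * |x i| ≤ n) {c : ℝ}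
    (hc : 0 < c) (α : ℕ) :
    (torusEigenvalue n x + c) ^ (-(α : ℤ)) ≤
      ((2 / π) ^ 2) ^ (-(α : ℤ)) * (∑ i, x i ^ 2 + c) ^ (-(α : ℤ)) := by
  have hπ : (2 / π) ^ 2 ≤ 1 := pow_le_one₀ (by positivity) ((div_le_one pi_pos).2 two_le_pi)
  have hS : 0 ≤ ∑ i, x i ^ 2 := by positivity
  have hle : (2 / π) ^ 2 * (∑ i, x i ^ 2 + c) ≤ torusEigenvalue n x + c := by
    nlinarith [sq_two_div_pi_mul_sum_le_torusEigenvalue hx]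
  rw [← mul_zpow, zpow_neg, zpow_neg, zpow_natCast, zpow_natCast]
  exact inv_anti₀ (by positivity) (pow_le_pow_left₀ (by positivity) hle α)

variable [DecidableEq ι]

/-- A set of representatives of `(ℤ / n)^ι`. -/
noncomputable def centeredBox (ι : Type*) [Fintype ι] [DecidableEq ι] (n : ℕ) : Finset (ι → ℤ) :=
  Fintype.piFinset fun _ => Ioc ((n : ℤ) / 2 - n) (n / 2)

lemma two_mul_abs_le_of_mem_centeredBox {n : ℕ} {k : ι → ℤ} (hk : k ∈ centeredBox ι n) (i : ι) :
    2 * |(k i : ℝ)| ≤ n := by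
  have hki := mem_Ioc.1 (Fintype.mem_piFinset.1 hk i)
  rw [← abs_two, ← abs_mul, abs_le]
  constructor <;> exact_mod_cast (by omega)

lemma eventually_mem_centeredBox (k : ι → ℤ) : ∀ᶠ n in atTop, k ∈ centeredBox ι n := by
  simp only [centeredBox, Fintype.mem_piFinset, mem_Ioc]
  refine eventually_all.2 fun i => ?_
  filter_upwards [eventually_ge_atTop (2 * (k i).natAbs + 2)] with n hn
  omega

lemma sum_piFinset_range_eq_sum_centeredBox {M : Type*} [AddCommMonoid M] (n : ℕ) (F : ℝ → M) :
    ∑ k ∈ Fintype.piFinset fun _ : ι => range n, F (torusEigenvalue n fun i => (k i : ℝ)) =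
      ∑ k ∈ centeredBox ι n, F (torusEigenvalue n fun i => (k i : ℝ)) := by
  refine sum_nbij' (fun k i => if 2 * k i ≤ n then (k i : ℤ) else k i - n)
    (fun k i => (if 0 ≤ k i then k i else k i + n).toNat) ?_ ?_ ?_ ?_ fun k _ => ?value
  case value =>
    simp only [torusEigenvalue]
    congr 3 with i
    split_ifs
    · norm_cast
    · push_cast
      exact (sin_sq_pi_mul_sub_div_self _ _).symm
  all_goals
    simp only [centeredBox, Fintype.mem_piFinset, mem_range, mem_Ioc, funext_iff]
    intro k hk i
    have := hk i
    split_ifs <;> omega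

end TorusEigenvalue

theorem stmt_3_general (m α : ℕ) (hα : m ≤ α) (z : ℝ) (hz : 0 < z) :
    Summable (fun k : Fin m → ℤ => ((∑ i : Fin m, ((k i : ℝ))^2) + z^2) ^ (-(α : ℤ))) ∧
    Tendsto (fun n : ℕ =>
        ∑ k ∈ Fintype.piFinset (fun _ : Fin m => Finset.range n),
          ((n : ℝ)^2 / π^2 * (∑ i : Fin m, Real.sin (π * (k i : ℝ) / (n : ℝ))^2) + z^2)
            ^ (-(α : ℤ)))
      atTop
      (nhds (∑' k : Fin m → ℤ, ((∑ i : Fin m, ((k i : ℝ))^2) + z^2) ^ (-(α : ℤ)))) := by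
  have hz₂ : 0 < z ^ 2 := by positivity
  have hsum := summable_sum_sq_add_zpow_neg hα hz₂
  refine ⟨hsum, ?_⟩
  set term : ℕ → (Fin m → ℤ) → ℝ := fun n k =>
    (torusEigenvalue n (fun i => (k i : ℝ)) + z ^ 2) ^ (-(α : ℤ))
  have hlim : ∀ k, Tendsto (fun n => (centeredBox (Fin m) n : Set (Fin m → ℤ)).indicator (term n) k)
      atTop (𝓝 ((∑ i, (k i : ℝ) ^ 2 + z ^ 2) ^ (-(α : ℤ)))) := fun k =>
    (((tendsto_torusEigenvalue _).add_const _).zpow₀ _ (.inl (by positivity))).congr'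
      ((eventually_mem_centeredBox k).mono fun n hn => (Set.indicator_of_mem hn _).symm)
  have hbound : ∀ n k, ‖(centeredBox (Fin m) n : Set (Fin m → ℤ)).indicator (term n) k‖ ≤
      ((2 / π) ^ 2) ^ (-(α : ℤ)) * (∑ i, (k i : ℝ) ^ 2 + z ^ 2) ^ (-(α : ℤ)) := fun n k => by
    rw [norm_indicator_eq_indicator_norm, Set.indicator_apply]
    split_ifs with hk
    · have hω := torusEigenvalue_nonneg n fun i => (k i : ℝ)
      rw [Real.norm_of_nonneg (by positivity)]
      exact torusEigenvalue_add_zpow_neg_le (two_mul_abs_le_of_mem_centeredBox hk) hz₂ α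
    · positivity
  refine (tendsto_tsum_of_dominated_convergence (hsum.mul_left _) hlim (.of_forall hbound)).congr
    fun n => ?_
  rw [← sum_eq_tsum_indicator]
  exact (sum_piFinset_range_eq_sum_centeredBox n fun t => (t + z ^ 2) ^ (-(α : ℤ))).symm

/-- for integers `m ≥ 1`, `α ≥ m` and `z > 0`, the series
`∑_{k ∈ ℤ^m} (k₁²+⋯+k_m²+z²)^{−α}` converges absolutely, and the resolvent power traces
of the discrete torus Laplacians, `∑_{k ∈ {0,…,n−1}^m} (ω(n,k)+z²)^{−α}` with
`ω(n,k) = (n²/π²)·∑ᵢ sin²(π kᵢ/n)`, converge to it as `n → ∞`. -/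
theorem stmt_3 (m α : ℕ) (hm : 1 ≤ m) (hα : m ≤ α) (z : ℝ) (hz : 0 < z) :
    Summable (fun k : Fin m → ℤ => ((∑ i : Fin m, ((k i : ℝ))^2) + z^2) ^ (-(α : ℤ))) ∧
    Tendsto (fun n : ℕ =>
        ∑ k ∈ Fintype.piFinset (fun _ : Fin m => Finset.range n),
          ((n : ℝ)^2 / π^2 * (∑ i : Fin m, Real.sin (π * (k i : ℝ) / (n : ℝ))^2) + z^2)
            ^ (-(α : ℤ)))
      atTop
      (nhds (∑' k : Fin m → ℤ, ((∑ i : Fin m, ((k i : ℝ))^2) + z^2) ^ (-(α : ℤ)))) :=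
  stmt_3_general m α hα z hz
end

section
/- Fix an integer m ≥ 1. For an integer n ≥ 1 define T_n(z) := ∑_{k ∈ {0,…,n−1}^m} (ω(n,k) + z²)^{−m} and T(z) := ∑_{k ∈ ℤ^m} (k₁² + ⋯ + k_m² + z²)^{−m} for z > 0. Then T_n and T are smooth functions on (0,∞), and for every r ∈ ℕ and every z > 0 one has lim_{n→∞} T_n^{(r)}(z) = T^{(r)}(z), where the superscript (r) denotes the r-th derivative with respect to z. -/
open Real Filter

/-- The resolvent trace `Tr(Δ_n + z²)^{−m}` of the discrete torus Laplacian on `(ℤ/nℤ)^m`. -/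
noncomputable def discreteResTrace (m n : ℕ) (z : ℝ) : ℝ :=
  ∑ k ∈ Fintype.piFinset (fun _ : Fin m => Finset.range n),
    ((n : ℝ)^2 / π^2 * (∑ i : Fin m, Real.sin (π * (k i : ℝ) / (n : ℝ))^2) + z^2) ^ (-(m : ℤ))

/-- The resolvent trace `Tr(Δ + z²)^{−m}` of the Laplace–Beltrami operator on the `m`-torus
given by the product of `m` unit circles. -/
noncomputable def smoothResTrace (m : ℕ) (z : ℝ) : ℝ :=
  ∑' k : Fin m → ℤ, ((∑ i : Fin m, ((k i : ℝ))^2) + z^2) ^ (-(m : ℤ))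




noncomputable section
namespace Stmt4Aux

def step (t : ℝ × ℕ × ℕ) : List (ℝ × ℕ × ℕ) :=
  [(t.1 * t.2.1, t.2.1 - 1, t.2.2), (-2 * t.1 * t.2.2, t.2.1 + 1, t.2.2 + 1)]

def Lrec (m : ℕ) : ℕ → List (ℝ × ℕ × ℕ)
  | 0 => [(1, 0, m)]
  | r + 1 => (Lrec m r).flatMap step

def termE (L : List (ℝ × ℕ × ℕ)) (a y : ℝ) : ℝ :=
  (L.map fun t => t.1 * y ^ t.2.1 * (a + y ^ 2) ^ (-(t.2.2 : ℤ))).sum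

@[simp] lemma termE_nil (a y : ℝ) : termE [] a y = 0 := rfl

@[simp] lemma termE_cons (t : ℝ × ℕ × ℕ) (L : List (ℝ × ℕ × ℕ)) (a y : ℝ) :
    termE (t :: L) a y = t.1 * y ^ t.2.1 * (a + y ^ 2) ^ (-(t.2.2 : ℤ)) + termE L a y := by
  simp [termE]

lemma termE_append (L1 L2 : List (ℝ × ℕ × ℕ)) (a y : ℝ) :
    termE (L1 ++ L2) a y = termE L1 a y + termE L2 a y := by
  simp [termE]

lemma mem_Lrec (m r : ℕ) : ∀ t ∈ Lrec m r, m ≤ t.2.2 := by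
  induction r with
  | zero => intro t ht; simp [Lrec] at ht; simp [ht]
  | succ r ih =>
    intro t ht
    simp only [Lrec, List.mem_flatMap] at ht
    obtain ⟨s, hs, hts⟩ := ht
    have := ih s hs
    simp [step] at hts
    rcases hts with h | h <;> subst h <;> simpa using by omega

lemma hasDerivAt_termE (L : List (ℝ × ℕ × ℕ)) {a y : ℝ} (h : a + y ^ 2 ≠ 0) :
    HasDerivAt (fun w => termE L a w) (termE (L.flatMap step) a y) y := by
  induction L with
  | nil => simpa using hasDerivAt_const y (0 : ℝ)
  | cons t L ih =>
    obtain ⟨c, p, q⟩ := t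
    have hpow : HasDerivAt (fun w : ℝ => w ^ p) ((p : ℝ) * y ^ (p - 1)) y := hasDerivAt_pow p y
    have hinner : HasDerivAt (fun w : ℝ => a + w ^ 2) (2 * y) y := by
      simpa using (hasDerivAt_pow 2 y).const_add a
    have houter : HasDerivAt (fun x : ℝ => x ^ (-(q : ℤ)))
        ((-(q : ℤ)) * (a + y ^ 2) ^ (-(q : ℤ) - 1)) (a + y ^ 2) := by
      simpa using hasDerivAt_zpow (-(q : ℤ)) (a + y ^ 2) (Or.inl h)
    have hcomp : HasDerivAt (fun w : ℝ => (a + w ^ 2) ^ (-(q : ℤ)))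
        ((-(q : ℤ)) * (a + y ^ 2) ^ (-(q : ℤ) - 1) * (2 * y)) y := by have h' := houter.comp y hinner; exact h'
    have hmul := (hpow.const_mul c).mul hcomp
    have htot := hmul.add ih
    refine htot.congr_deriv ?_
    have e1 : (-(((q : ℕ) + 1 : ℕ) : ℤ)) = -(q : ℤ) - 1 := by push_cast; ring
    have e2 : (a + y ^ 2) ^ (-(q : ℤ) - 1) = (a + y ^ 2) ^ (-(q : ℤ)) * (a + y ^ 2)⁻¹ := by
      rw [zpow_sub₀ h, zpow_one]; rfl
    simp only [List.flatMap_cons, termE_append, step, termE_cons, termE_nil, e1, e2, pow_succ]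
    push_cast
    ring

lemma zpow_neg_nat_le {x x' : ℝ} (hx : 0 < x) (h : x ≤ x') (n : ℕ) :
    x' ^ (-(n : ℤ)) ≤ x ^ (-(n : ℤ)) := by
  rw [zpow_neg, zpow_neg, zpow_natCast, zpow_natCast]
  exact inv_anti₀ (pow_pos hx n) (pow_le_pow_left₀ hx.le h n)

def Cbound (L : List (ℝ × ℕ × ℕ)) (m : ℕ) (R δ : ℝ) : ℝ :=
  (L.map fun t => |t.1| * R ^ t.2.1 * δ ^ (-((t.2.2 - m : ℕ) : ℤ))).sum

lemma Cbound_nonneg (L : List (ℝ × ℕ × ℕ)) (m : ℕ) {R δ : ℝ} (hR : 0 ≤ R) (hδ : 0 ≤ δ) :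
    0 ≤ Cbound L m R δ := by
  induction L with
  | nil => simp [Cbound]
  | cons t L ih =>
    have h1 : (0:ℝ) ≤ |t.1| * R ^ t.2.1 * δ ^ (-((t.2.2 - m : ℕ) : ℤ)) := by positivity
    simpa [Cbound] using add_nonneg h1 (by simpa [Cbound] using ih)

lemma abs_termE_le (m : ℕ) (L : List (ℝ × ℕ × ℕ)) (hq : ∀ t ∈ L, m ≤ t.2.2)
    {R δ a y : ℝ} (hδ : 0 < δ) (ha : 0 ≤ a) (hy2 : δ ≤ y ^ 2) (hyR : |y| ≤ R) :
    |termE L a y| ≤ Cbound L m R δ * (a + δ) ^ (-(m : ℤ)) := by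
  induction L with
  | nil => simp [Cbound]
  | cons t L ih =>
    obtain ⟨c, p, q⟩ := t
    have hqm : m ≤ q := by simpa using hq (c, p, q) List.mem_cons_self
    have hq' : ∀ t ∈ L, m ≤ t.2.2 := fun t ht => hq t (List.mem_cons_of_mem _ ht)
    have hay : 0 < a + y ^ 2 := by nlinarith
    have haδ : 0 < a + δ := by nlinarith
    have hsplit : (a + y ^ 2) ^ (-(q : ℤ))
        = (a + y ^ 2) ^ (-(m : ℤ)) * (a + y ^ 2) ^ (-((q - m : ℕ) : ℤ)) := by
      rw [← zpow_add₀ hay.ne']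
      congr 1
      have : ((q - m : ℕ) : ℤ) = (q : ℤ) - m := by omega
      omega
    have habs : |c * y ^ p * (a + y ^ 2) ^ (-(q : ℤ))|
        = |c| * |y| ^ p * (a + y ^ 2) ^ (-(q : ℤ)) := by
      rw [abs_mul, abs_mul, abs_pow, abs_of_nonneg (zpow_nonneg hay.le _)]
    have hterm : |c * y ^ p * (a + y ^ 2) ^ (-(q : ℤ))|
        ≤ |c| * R ^ p * δ ^ (-((q - m : ℕ) : ℤ)) * (a + δ) ^ (-(m : ℤ)) := by
      rw [habs, hsplit]
      have h1 : |y| ^ p ≤ R ^ p := pow_le_pow_left₀ (abs_nonneg y) hyR p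
      have h2 : (a + y ^ 2) ^ (-(m : ℤ)) ≤ (a + δ) ^ (-(m : ℤ)) :=
        zpow_neg_nat_le haδ (by nlinarith) m
      have h3 : (a + y ^ 2) ^ (-((q - m : ℕ) : ℤ)) ≤ δ ^ (-((q - m : ℕ) : ℤ)) :=
        zpow_neg_nat_le hδ (by nlinarith) _
      calc |c| * |y| ^ p * ((a + y ^ 2) ^ (-(m : ℤ)) * (a + y ^ 2) ^ (-((q - m : ℕ) : ℤ)))
          ≤ |c| * R ^ p * ((a + δ) ^ (-(m : ℤ)) * δ ^ (-((q - m : ℕ) : ℤ))) := by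
            apply mul_le_mul
            · exact mul_le_mul le_rfl h1 (by positivity) (abs_nonneg c)
            · exact mul_le_mul h2 h3 (zpow_nonneg hay.le _) (zpow_nonneg haδ.le _)
            · exact mul_nonneg (zpow_nonneg hay.le _) (zpow_nonneg hay.le _)
            · exact mul_nonneg (abs_nonneg c) (pow_nonneg ((abs_nonneg y).trans hyR) p)
        _ = |c| * R ^ p * δ ^ (-((q - m : ℕ) : ℤ)) * (a + δ) ^ (-(m : ℤ)) := by ring
    have hC : Cbound ((c, p, q) :: L) m R δ
        = |c| * R ^ p * δ ^ (-((q - m : ℕ) : ℤ)) + Cbound L m R δ := by simp [Cbound]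
    calc |termE ((c, p, q) :: L) a y|
        ≤ |c * y ^ p * (a + y ^ 2) ^ (-(q : ℤ))| + |termE L a y| := by
          rw [termE_cons]; exact abs_add_le _ _
      _ ≤ |c| * R ^ p * δ ^ (-((q - m : ℕ) : ℤ)) * (a + δ) ^ (-(m : ℤ))
          + Cbound L m R δ * (a + δ) ^ (-(m : ℤ)) := add_le_add hterm (ih hq')
      _ = Cbound ((c, p, q) :: L) m R δ * (a + δ) ^ (-(m : ℤ)) := by rw [hC]; ring

lemma continuousAt_termE (L : List (ℝ × ℕ × ℕ)) (y : ℝ) {a₀ : ℝ} (h : 0 < a₀ + y ^ 2) :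
    ContinuousAt (fun a => termE L a y) a₀ := by
  induction L with
  | nil => simpa using continuousAt_const
  | cons t L ih =>
    simp only [termE_cons]
    apply ContinuousAt.add _ ih
    have hb : ContinuousAt (fun a : ℝ => ((a + y ^ 2) ^ t.2.2)⁻¹) a₀ :=
      ((continuousAt_id.add continuousAt_const).pow _).inv₀ (pow_ne_zero _ h.ne')
    have : ContinuousAt (fun a : ℝ => t.1 * y ^ t.2.1 * ((a + y ^ 2) ^ t.2.2)⁻¹) a₀ :=
      continuousAt_const.mul hb
    refine this.congr ?_
    filter_upwards with a
    rw [zpow_neg, zpow_natCast]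

section Series
variable {ι : Type*}

lemma FF_hasDerivAt (m : ℕ) (a : ι → ℝ) (ε : ι → ℝ) (ha : ∀ k, 0 ≤ a k)
    (hε : ∀ k, ε k = 0 ∨ ε k = 1)
    (hsum : ∀ c : ℝ, 0 < c → Summable fun k => ε k * (a k + c) ^ (-(m : ℤ)))
    (r : ℕ) {z : ℝ} (hz : 0 < z) :
    HasDerivAt (fun w => ∑' k, ε k * termE (Lrec m r) (a k) w)
      (∑' k, ε k * termE (Lrec m (r + 1)) (a k) z) z := by
  set δ : ℝ := (z / 2) ^ 2 with hδdef
  have hδ : 0 < δ := by positivity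
  set R : ℝ := 2 * z with hRdef
  have hbound : ∀ (L : List (ℝ × ℕ × ℕ)), (∀ t ∈ L, m ≤ t.2.2) →
      ∀ k, ∀ y ∈ Set.Ioo (z / 2) (2 * z),
      ‖ε k * termE L (a k) y‖ ≤ Cbound L m R δ * (ε k * (a k + δ) ^ (-(m : ℤ))) := by
    intro L hL k y hy
    have h1 : δ ≤ y ^ 2 := by
      have : z / 2 ≤ y := hy.1.le
      have h0 : (0:ℝ) ≤ z / 2 := by positivity
      nlinarith
    have h2 : |y| ≤ R := by
      rw [abs_of_pos (lt_trans (by positivity) hy.1)]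
      exact hy.2.le
    have hC : 0 ≤ Cbound L m R δ := Cbound_nonneg L m (by positivity) hδ.le
    rcases hε k with h | h
    · simp [h]
    · rw [h, one_mul, one_mul, Real.norm_eq_abs]
      exact (abs_termE_le m L hL hδ (ha k) h1 h2)
  refine hasDerivAt_tsum_of_isPreconnected
      (u := fun k => Cbound (Lrec m (r + 1)) m R δ * (ε k * (a k + δ) ^ (-(m : ℤ))))
      ((hsum δ hδ).mul_left _) isOpen_Ioo isPreconnected_Ioo
      (g := fun k y => ε k * termE (Lrec m r) (a k) y)
      (g' := fun k y => ε k * termE (Lrec m (r + 1)) (a k) y)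
      (fun k y hy => ?_) (fun k y hy => ?_)
      (show z ∈ Set.Ioo (z / 2) (2 * z) by constructor <;> linarith)
      ?_ (show z ∈ Set.Ioo (z / 2) (2 * z) by constructor <;> linarith)
  · have hay : a k + y ^ 2 ≠ 0 := by
      have : 0 < y := lt_trans (by positivity) hy.1
      have := ha k
      positivity
    exact (hasDerivAt_termE (Lrec m r) hay).const_mul (ε k)
  · exact hbound _ (mem_Lrec m (r + 1)) k y hy
  · apply Summable.of_norm_bounded (((hsum δ hδ).mul_left (Cbound (Lrec m r) m R δ)))
    intro k
    exact hbound _ (mem_Lrec m r) k z (by constructor <;> linarith)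

lemma FF_iteratedDeriv (m : ℕ) (a : ι → ℝ) (ε : ι → ℝ) (ha : ∀ k, 0 ≤ a k)
    (hε : ∀ k, ε k = 0 ∨ ε k = 1)
    (hsum : ∀ c : ℝ, 0 < c → Summable fun k => ε k * (a k + c) ^ (-(m : ℤ)))
    (r : ℕ) {z : ℝ} (hz : 0 < z) :
    iteratedDeriv r (fun w => ∑' k, ε k * termE (Lrec m 0) (a k) w) z
      = ∑' k, ε k * termE (Lrec m r) (a k) z := by
  induction r generalizing z with
  | zero => simp
  | succ r ih =>
    rw [iteratedDeriv_succ]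
    have hev : iteratedDeriv r (fun w => ∑' k, ε k * termE (Lrec m 0) (a k) w)
        =ᶠ[nhds z] fun w => ∑' k, ε k * termE (Lrec m r) (a k) w := by
      filter_upwards [Ioi_mem_nhds hz] with y hy
      exact ih hy
    rw [hev.deriv_eq]
    exact (FF_hasDerivAt m a ε ha hε hsum r hz).deriv

end Series

lemma summable_inv_sq_add {c : ℝ} (hc : 0 < c) :
    Summable fun j : ℤ => (((j : ℝ)) ^ 2 + c)⁻¹ := by
  have h1 : Summable (fun j : ℤ => 1 / ((j : ℝ)) ^ 2) :=
    Real.summable_one_div_int_pow.mpr one_lt_two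
  have h2 : Summable (fun j : ℤ => if j = 0 then c⁻¹ else 0) := by
    apply summable_of_ne_finset_zero (s := {0})
    intro b hb
    simp only [Finset.mem_singleton] at hb
    simp [hb]
  apply Summable.of_nonneg_of_le (fun j => by positivity) _ (h1.add h2)
  intro j
  rcases eq_or_ne j 0 with h | h
  · simp [h]
  · have hj : (1:ℝ) ≤ ((j:ℝ))^2 := by
      have : (1:ℝ) ≤ |(j:ℝ)| := by
        rw [← Int.cast_abs]
        exact_mod_cast Int.one_le_abs h
      nlinarith [sq_abs ((j:ℝ)), sq_nonneg (|(j:ℝ)| - 1)]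
    simp only [h, if_neg, ite_false, add_zero, one_div]
    exact inv_anti₀ (by nlinarith) (by nlinarith)

lemma summable_prod_pi (m : ℕ) (hm : 1 ≤ m) {f : ℤ → ℝ} (hf : Summable f)
    (hf0 : ∀ j, 0 ≤ f j) :
    Summable fun k : Fin m → ℤ => ∏ i, f (k i) := by
  induction m, hm using Nat.le_induction with
  | base =>
    have hinj : Function.Injective (fun k : Fin 1 → ℤ => k 0) := by
      intro k1 k2 h
      funext i
      fin_cases i
      exact h
    have := hf.comp_injective hinj
    apply this.congr
    intro k
    rw [Fin.prod_univ_one]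
    rfl
  | succ M hM ih =>
    have hfn : Summable fun j : ℤ => ‖f j‖ :=
      hf.congr fun j => (Real.norm_of_nonneg (hf0 j)).symm
    have hgn : Summable fun k : Fin M → ℤ => ‖∏ i, f (k i)‖ :=
      ih.congr fun k => (Real.norm_of_nonneg (Finset.prod_nonneg fun i _ => hf0 _)).symm
    have hmul : Summable fun p : ℤ × (Fin M → ℤ) => f p.1 * ∏ i, f (p.2 i) :=
      summable_mul_of_summable_norm (f := f) (g := fun k : Fin M → ℤ => ∏ i, f (k i)) hfn hgn
    have := hmul.comp_injective (Fin.consEquiv fun _ => ℤ).symm.injective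
    apply this.congr
    intro k
    simp only [Function.comp]
    rw [Fin.prod_univ_succ]
    rfl

lemma summable_A (m : ℕ) (hm : 1 ≤ m) {c : ℝ} (hc : 0 < c) :
    Summable fun k : Fin m → ℤ => ((∑ i, ((k i : ℝ)) ^ 2) + c) ^ (-(m : ℤ)) := by
  have hf := summable_inv_sq_add hc
  have hprod := summable_prod_pi m hm hf (fun j => by positivity)
  apply Summable.of_nonneg_of_le _ _ hprod
  · intro k
    have h0 : (0:ℝ) < (∑ i, ((k i : ℝ)) ^ 2) + c := by positivity
    positivity
  · intro k
    have hS : (0:ℝ) ≤ ∑ i, ((k i : ℝ)) ^ 2 := Finset.sum_nonneg fun i _ => sq_nonneg _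
    have h0 : (0:ℝ) < (∑ i, ((k i : ℝ)) ^ 2) + c := by positivity
    rw [zpow_neg, zpow_natCast]
    have h1 : ∏ i : Fin m, (((k i : ℝ)) ^ 2 + c) ≤ ((∑ i, ((k i : ℝ)) ^ 2) + c) ^ m := by
      have : ((∑ i, ((k i : ℝ)) ^ 2) + c) ^ m = ∏ _i : Fin m, ((∑ i, ((k i : ℝ)) ^ 2) + c) := by
        rw [Finset.prod_const, Finset.card_univ, Fintype.card_fin]
      rw [this]
      apply Finset.prod_le_prod (fun i _ => by positivity)
      intro i _
      have : ((k i : ℝ)) ^ 2 ≤ ∑ j, ((k j : ℝ)) ^ 2 :=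
        Finset.single_le_sum (f := fun j => ((k j : ℝ)) ^ 2)
          (fun j _ => sq_nonneg _) (Finset.mem_univ i)
      linarith
    calc (((∑ i, ((k i : ℝ)) ^ 2) + c) ^ m)⁻¹
        ≤ (∏ i : Fin m, (((k i : ℝ)) ^ 2 + c))⁻¹ :=
          inv_anti₀ (Finset.prod_pos fun i _ => by positivity) h1
      _ = ∏ i : Fin m, (((k i : ℝ)) ^ 2 + c)⁻¹ := by rw [Finset.prod_inv_distrib]

def AA (m : ℕ) (k : Fin m → ℤ) : ℝ := ∑ i, ((k i : ℝ)) ^ 2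

def aN (m n : ℕ) (k : Fin m → ℤ) : ℝ :=
  (n : ℝ) ^ 2 / π ^ 2 * ∑ i, Real.sin (π * (k i : ℝ) / n) ^ 2

def εN (m n : ℕ) (k : Fin m → ℤ) : ℝ :=
  if ∀ i, -(n : ℤ) < 2 * k i ∧ 2 * k i ≤ n then 1 else 0

lemma AA_nonneg (m : ℕ) (k : Fin m → ℤ) : 0 ≤ AA m k :=
  Finset.sum_nonneg fun i _ => sq_nonneg _

lemma aN_nonneg (m n : ℕ) (k : Fin m → ℤ) : 0 ≤ aN m n k :=
  mul_nonneg (div_nonneg (sq_nonneg _) (sq_nonneg _))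
    (Finset.sum_nonneg fun i _ => sq_nonneg _)

lemma εN_zero_or_one (m n : ℕ) (k : Fin m → ℤ) : εN m n k = 0 ∨ εN m n k = 1 := by
  unfold εN; split <;> simp

lemma sin_sq_ge (n : ℕ) (hn : 1 ≤ n) (j : ℤ) (h1 : -(n : ℤ) < 2 * j) (h2 : 2 * j ≤ n) :
    4 * (j : ℝ) ^ 2 / (n : ℝ) ^ 2 ≤ Real.sin (π * (j : ℝ) / n) ^ 2 := by
  have hπ := Real.pi_pos
  have hn' : (0 : ℝ) < n := by exact_mod_cast hn
  have habs : 2 * |(j : ℝ)| ≤ n := by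
    rw [← Int.cast_abs]
    exact_mod_cast (by rw [Int.abs_eq_natAbs]; omega : 2 * |j| ≤ (n : ℤ))
  set x := π * |(j : ℝ)| / n with hxdef
  have hx0 : 0 ≤ x := by positivity
  have hx : x ≤ π / 2 := by
    rw [hxdef, div_le_div_iff₀ hn' two_pos]
    nlinarith
  have hs := Real.mul_le_sin hx0 hx
  have hsq : (2 / π * x) ^ 2 ≤ Real.sin x ^ 2 :=
    pow_le_pow_left₀ (by positivity) hs 2
  have hval : (2 / π * x) ^ 2 = 4 * (j : ℝ) ^ 2 / (n : ℝ) ^ 2 := by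
    rw [hxdef]
    field_simp
    rw [← sq_abs ((j:ℝ))]
    ring
  have hsin : Real.sin (π * (j : ℝ) / n) ^ 2 = Real.sin x ^ 2 := by
    rcases abs_cases ((j : ℝ)) with ⟨h, _⟩ | ⟨h, _⟩
    · rw [hxdef, h]
    · rw [hxdef, h]
      have : π * -(j : ℝ) / n = -(π * (j : ℝ) / n) := by ring
      rw [this, Real.sin_neg, neg_sq]
  rw [hsin, ← hval]
  exact hsq

lemma aN_lower (m n : ℕ) (hn : 1 ≤ n) (k : Fin m → ℤ)
    (hk : ∀ i, -(n : ℤ) < 2 * k i ∧ 2 * k i ≤ n) {c : ℝ} (hc : 0 < c) :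
    (aN m n k + c) ^ (-(m : ℤ)) ≤ (4 / π ^ 2) ^ (-(m : ℤ)) * (AA m k + c) ^ (-(m : ℤ)) := by
  have hπ := Real.pi_pos
  have hn' : (0 : ℝ) < n := by exact_mod_cast hn
  have hAA := AA_nonneg m k
  have h1 : 4 / π ^ 2 * AA m k ≤ aN m n k := by
    unfold aN AA
    rw [Finset.mul_sum, Finset.mul_sum]
    apply Finset.sum_le_sum
    intro i _
    have hi := sin_sq_ge n hn (k i) (hk i).1 (hk i).2
    calc 4 / π ^ 2 * (k i : ℝ) ^ 2
        = (n : ℝ) ^ 2 / π ^ 2 * (4 * (k i : ℝ) ^ 2 / (n : ℝ) ^ 2) := by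
          field_simp
      _ ≤ (n : ℝ) ^ 2 / π ^ 2 * Real.sin (π * (k i : ℝ) / n) ^ 2 :=
          mul_le_mul_of_nonneg_left hi (by positivity)
  have h2 : 4 / π ^ 2 * c ≤ c := by
    rw [div_mul_eq_mul_div, div_le_iff₀ (by positivity)]
    nlinarith [mul_pos hc (show (0:ℝ) < π ^ 2 - 4 by nlinarith [Real.pi_gt_three])]
  have hkey : 4 / π ^ 2 * (AA m k + c) ≤ aN m n k + c := by
    rw [mul_add]
    exact add_le_add h1 h2
  calc (aN m n k + c) ^ (-(m : ℤ))
      ≤ (4 / π ^ 2 * (AA m k + c)) ^ (-(m : ℤ)) :=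
        zpow_neg_nat_le (by positivity) hkey m
    _ = (4 / π ^ 2) ^ (-(m : ℤ)) * (AA m k + c) ^ (-(m : ℤ)) := mul_zpow _ _ _

lemma tendsto_sin_div : Tendsto (fun x : ℝ => Real.sin x / x) (nhdsWithin 0 {x | x ≠ 0}) (nhds 1) := by
  have h := Real.hasDerivAt_sin 0
  rw [hasDerivAt_iff_tendsto_slope] at h
  rw [Real.cos_zero] at h
  refine h.congr fun x => ?_
  rw [slope_def_field]
  simp

lemma coord_tendsto (j : ℤ) :
    Tendsto (fun n : ℕ => (n : ℝ) ^ 2 / π ^ 2 * Real.sin (π * (j : ℝ) / n) ^ 2) atTop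
      (nhds ((j : ℝ) ^ 2)) := by
  have hπ := Real.pi_pos
  rcases eq_or_ne j 0 with rfl | hj
  · simp
  · have hj' : ((j : ℝ)) ≠ 0 := Int.cast_ne_zero.mpr hj
    have ht : Tendsto (fun n : ℕ => π * (j : ℝ) / n) atTop (nhdsWithin 0 {x | x ≠ 0}) := by
      rw [tendsto_nhdsWithin_iff]
      constructor
      · exact tendsto_const_div_atTop_nhds_zero_nat (π * (j : ℝ))
      · filter_upwards [eventually_ge_atTop 1] with n hn
        have hn' : (0 : ℝ) < n := by exact_mod_cast hn
        show π * (j : ℝ) / n ≠ 0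
        exact div_ne_zero (mul_ne_zero Real.pi_ne_zero hj') hn'.ne'
    have h2 : Tendsto (fun n : ℕ => Real.sin (π * (j : ℝ) / n) / (π * (j : ℝ) / n)) atTop
        (nhds 1) := tendsto_sin_div.comp ht
    have h3 : Tendsto (fun n : ℕ =>
        ((j : ℝ) * (Real.sin (π * (j : ℝ) / n) / (π * (j : ℝ) / n))) ^ 2) atTop
        (nhds ((j : ℝ) ^ 2)) := by
      have := (tendsto_const_nhds (x := ((j : ℝ))).mul h2).pow 2
      simpa using this
    apply h3.congr'
    filter_upwards [eventually_ge_atTop 1] with n hn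
    have hn' : (0 : ℝ) < n := by exact_mod_cast hn
    field_simp

lemma key_eq (m n : ℕ) (hn : 1 ≤ n) (z : ℝ) :
    discreteResTrace m n z
      = ∑' k : Fin m → ℤ, εN m n k * (aN m n k + z ^ 2) ^ (-(m : ℤ)) := by
  classical
  set Icd : Finset ℤ :=
    (Finset.Ioc (-(n : ℤ)) (n : ℤ)).filter (fun j => -(n : ℤ) < 2 * j ∧ 2 * j ≤ (n : ℤ))
    with hIcd
  have hmemIcd : ∀ j : ℤ, j ∈ Icd ↔ (-(n : ℤ) < 2 * j ∧ 2 * j ≤ (n : ℤ)) := by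
    intro j
    rw [hIcd, Finset.mem_filter, Finset.mem_Ioc]
    omega
  set S : Finset (Fin m → ℤ) := Fintype.piFinset (fun _ => Icd) with hS
  have hvanish : ∀ k ∉ S, εN m n k * (aN m n k + z ^ 2) ^ (-(m : ℤ)) = 0 := by
    intro k hk
    have : εN m n k = 0 := by
      unfold εN
      rw [if_neg]
      intro hall
      apply hk
      rw [hS, Fintype.mem_piFinset]
      intro i
      rw [hmemIcd]
      exact hall i
    rw [this, zero_mul]
  rw [tsum_eq_sum hvanish]
  have hone : ∀ k ∈ S, εN m n k * (aN m n k + z ^ 2) ^ (-(m : ℤ))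
      = (aN m n k + z ^ 2) ^ (-(m : ℤ)) := by
    intro k hk
    have : εN m n k = 1 := by
      unfold εN
      rw [if_pos]
      intro i
      rw [← hmemIcd]
      exact Fintype.mem_piFinset.mp (by rwa [hS] at hk) i
    rw [this, one_mul]
  rw [Finset.sum_congr rfl hone]
  unfold discreteResTrace aN
  refine Finset.sum_nbij'
    (fun k i => if 2 * (k i : ℤ) ≤ n then (k i : ℤ) else (k i : ℤ) - n)
    (fun k i => if 0 ≤ k i then (k i).toNat else (k i + n).toNat)
    ?_ ?_ ?_ ?_ ?_
  · intro k hk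
    rw [Fintype.mem_piFinset] at hk ⊢
    intro i
    have := Finset.mem_range.mp (hk i)
    rw [hmemIcd]
    beta_reduce
    split_ifs <;> omega
  · intro k hk
    rw [Fintype.mem_piFinset] at hk ⊢
    intro i
    have := (hmemIcd (k i)).mp (hk i)
    rw [Finset.mem_range]
    beta_reduce
    split_ifs <;> omega
  · intro k hk
    rw [Fintype.mem_piFinset] at hk
    funext i
    have := Finset.mem_range.mp (hk i)
    beta_reduce
    split_ifs <;> omega
  · intro k hk
    rw [Fintype.mem_piFinset] at hk
    funext i
    have := (hmemIcd (k i)).mp (hk i)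
    beta_reduce
    split_ifs <;> omega
  · intro k hk
    rw [Fintype.mem_piFinset] at hk
    have hn' : ((n : ℝ)) ≠ 0 := by
      have : (0 : ℝ) < n := by exact_mod_cast hn
      exact this.ne'
    have hsums : ∑ i : Fin m, Real.sin (π * ((k i : ℕ) : ℝ) / n) ^ 2
        = ∑ i : Fin m, Real.sin
          (π * (((if 2 * ((k i : ℕ) : ℤ) ≤ (n : ℤ) then ((k i : ℕ) : ℤ)
            else ((k i : ℕ) : ℤ) - n) : ℤ) : ℝ) / n) ^ 2 := by
      apply Finset.sum_congr rfl
      intro i _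
      have hti := Finset.mem_range.mp (hk i)
      split_ifs with h
      · norm_num
      · have hcast : ((((k i : ℕ) : ℤ) - n : ℤ) : ℝ) = ((k i : ℕ) : ℝ) - n := by
          push_cast; ring
        rw [hcast]
        have harg : π * (((k i : ℕ) : ℝ) - n) / n = π * ((k i : ℕ) : ℝ) / n - π := by
          field_simp
        rw [harg, Real.sin_sub_pi, neg_sq]
    beta_reduce
    rw [hsums]

lemma hsumN (m n : ℕ) (hm : 1 ≤ m) (hn : 1 ≤ n) {c : ℝ} (hc : 0 < c) :
    Summable fun k : Fin m → ℤ => εN m n k * (aN m n k + c) ^ (-(m : ℤ)) := by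
  have hπ := Real.pi_pos
  apply Summable.of_nonneg_of_le _ _
    ((summable_A m hm hc).mul_left ((4 / π ^ 2) ^ (-(m : ℤ))))
  · intro k
    have h1 : (0:ℝ) ≤ (aN m n k + c) ^ (-(m : ℤ)) :=
      zpow_nonneg (by nlinarith [aN_nonneg m n k]) _
    have h0 : (0:ℝ) ≤ εN m n k := by
      rcases εN_zero_or_one m n k with h | h <;> rw [h] <;> norm_num
    exact mul_nonneg h0 h1
  · intro k
    have hAA := AA_nonneg m k
    rcases εN_zero_or_one m n k with h | h
    · rw [h, zero_mul]
      exact mul_nonneg (zpow_nonneg (by positivity) _) (zpow_nonneg (by positivity) _)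
    · rw [h, one_mul]
      have hcond : ∀ i, -(n : ℤ) < 2 * k i ∧ 2 * k i ≤ n := by
        by_contra hcon
        unfold εN at h
        rw [if_neg hcon] at h
        norm_num at h
      exact aN_lower m n hn k hcond hc

lemma smooth_contDiffOn (m : ℕ) (hm : 1 ≤ m) :
    ContDiffOn ℝ (⊤ : ℕ∞) (smoothResTrace m) (Set.Ioi 0) := by
  classical
  set F : ℂ → ℂ := fun z => ∑' k : Fin m → ℤ, ((AA m k : ℂ) + z ^ 2) ^ (-(m : ℤ)) with hF
  have hball : ∀ x : ℝ, 0 < x → ∀ w : ℂ, w ∈ Metric.ball (x : ℂ) (x / 4) →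
      (∀ k : Fin m → ℤ, AA m k + x ^ 2 / 2 ≤ ‖(AA m k : ℂ) + w ^ 2‖) ∧ ‖w‖ ≤ 2 * x := by
    intro x hx w hw
    rw [Metric.mem_ball, Complex.dist_eq] at hw
    have hre : |(w - (x : ℂ)).re| ≤ ‖w - (x : ℂ)‖ := Complex.abs_re_le_norm _
    have him : |(w - (x : ℂ)).im| ≤ ‖w - (x : ℂ)‖ := Complex.abs_im_le_norm _
    rw [Complex.sub_re, Complex.ofReal_re] at hre
    rw [Complex.sub_im, Complex.ofReal_im, sub_zero] at him
    have hre' := abs_lt.mp (lt_of_le_of_lt hre hw)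
    have him' := abs_lt.mp (lt_of_le_of_lt him hw)
    constructor
    · intro k
      have hAA := AA_nonneg m k
      have h1 : (((AA m k : ℂ)) + w ^ 2).re = AA m k + (w.re ^ 2 - w.im ^ 2) := by
        rw [pow_two, Complex.add_re, Complex.mul_re, Complex.ofReal_re]
        ring
      have h2 : AA m k + x ^ 2 / 2 ≤ (((AA m k : ℂ)) + w ^ 2).re := by
        rw [h1]
        nlinarith [hre'.1, hre'.2, him'.1, him'.2]
      calc AA m k + x ^ 2 / 2 ≤ (((AA m k : ℂ)) + w ^ 2).re := h2
        _ ≤ ‖((AA m k : ℂ)) + w ^ 2‖ := Complex.re_le_norm _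
    · calc ‖w‖ = ‖(x : ℂ) + (w - (x : ℂ))‖ := by ring_nf
        _ ≤ ‖(x : ℂ)‖ + ‖w - (x : ℂ)‖ := norm_add_le _ _
        _ ≤ x + x / 4 := by
            apply add_le_add
            · rw [Complex.norm_real, Real.norm_eq_abs, abs_of_pos hx]
            · exact hw.le
        _ ≤ 2 * x := by linarith
  have hdiff : ∀ x : ℝ, 0 < x → ∀ z ∈ Metric.ball (x : ℂ) (x / 4),
      DifferentiableAt ℂ F z := by
    intro x hx z hz
    have hδ : (0 : ℝ) < x ^ 2 / 2 := by positivity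
    have hsummand := summable_A m hm hδ
    refine (hasDerivAt_tsum_of_isPreconnected
      (u := fun k => ((m : ℝ) * ((AA m k + x ^ 2 / 2) ^ (-(m : ℤ)) * (x ^ 2 / 2)⁻¹))
        * (2 * (2 * x)))
      ?_ Metric.isOpen_ball ((convex_ball _ _).isPreconnected)
      (g := fun k w => ((AA m k : ℂ) + w ^ 2) ^ (-(m : ℤ)))
      (g' := fun k w => ((-(m : ℤ) : ℤ) : ℂ) * ((AA m k : ℂ) + w ^ 2) ^ (-(m : ℤ) - 1)
        * (2 * w))
      ?_ ?_ (Metric.mem_ball_self (by positivity)) ?_ hz).differentiableAt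
    · have : Summable fun k : Fin m → ℤ =>
          ((m : ℝ) * ((x ^ 2 / 2)⁻¹ * (2 * (2 * x)))) * (AA m k + x ^ 2 / 2) ^ (-(m : ℤ)) :=
        hsummand.mul_left _
      apply this.congr
      intro k
      ring
    · intro k w hw
      have hlow := (hball x hx w hw).1 k
      have hAA := AA_nonneg m k
      have hpos : (0 : ℝ) < AA m k + x ^ 2 / 2 := by positivity
      have hne : ((AA m k : ℂ) + w ^ 2) ≠ 0 := by
        intro h0
        rw [h0, norm_zero] at hlow
        nlinarith
      have hinner : HasDerivAt (fun w : ℂ => (AA m k : ℂ) + w ^ 2) (2 * w) w := by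
        simpa using (hasDerivAt_pow 2 w).const_add ((AA m k : ℂ))
      have houter := hasDerivAt_zpow (-(m : ℤ)) ((AA m k : ℂ) + w ^ 2) (Or.inl hne)
      exact houter.comp w hinner
    · intro k w hw
      obtain ⟨hlowall, hwle⟩ := hball x hx w hw
      have hlow := hlowall k
      have hAA := AA_nonneg m k
      have hpos : (0 : ℝ) < AA m k + x ^ 2 / 2 := by positivity
      have hδ2 : (0 : ℝ) < x ^ 2 / 2 := by positivity
      have hBpos : (0 : ℝ) < ‖(AA m k : ℂ) + w ^ 2‖ := lt_of_lt_of_le hpos hlow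
      rw [norm_mul, norm_mul, norm_zpow]
      have e0 : ‖(((-(m : ℤ) : ℤ)) : ℂ)‖ = (m : ℝ) := by
        rw [Complex.norm_intCast]
        push_cast
        simp
      have e1 : ‖(AA m k : ℂ) + w ^ 2‖ ^ (-(m : ℤ) - 1)
          = ‖(AA m k : ℂ) + w ^ 2‖ ^ (-(m : ℤ)) * ‖(AA m k : ℂ) + w ^ 2‖⁻¹ := by
        rw [zpow_sub₀ hBpos.ne', zpow_one, div_eq_mul_inv]
      have h2 : ‖(AA m k : ℂ) + w ^ 2‖ ^ (-(m : ℤ)) ≤ (AA m k + x ^ 2 / 2) ^ (-(m : ℤ)) :=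
        zpow_neg_nat_le hpos hlow m
      have h3 : ‖(AA m k : ℂ) + w ^ 2‖⁻¹ ≤ (x ^ 2 / 2)⁻¹ :=
        inv_anti₀ hδ2 (le_trans (by linarith) hlow)
      have h4 : ‖2 * w‖ ≤ 2 * (2 * x) := by
        rw [norm_mul]
        have : ‖(2 : ℂ)‖ = 2 := by norm_num
        rw [this]
        exact mul_le_mul_of_nonneg_left hwle (by norm_num)
      rw [e0, e1]
      calc (m : ℝ) * (‖(AA m k : ℂ) + w ^ 2‖ ^ (-(m : ℤ)) * ‖(AA m k : ℂ) + w ^ 2‖⁻¹)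
          * ‖2 * w‖
          ≤ (m : ℝ) * ((AA m k + x ^ 2 / 2) ^ (-(m : ℤ)) * (x ^ 2 / 2)⁻¹) * (2 * (2 * x)) := by
            apply mul_le_mul _ h4 (norm_nonneg _) _
            · apply mul_le_mul_of_nonneg_left _ (Nat.cast_nonneg m)
              exact mul_le_mul h2 h3 (inv_nonneg.mpr (norm_nonneg _))
                (zpow_nonneg hpos.le _)
            · exact mul_nonneg (Nat.cast_nonneg m)
                (mul_nonneg (zpow_nonneg hpos.le _) (inv_nonneg.mpr hδ2.le))
        _ = (m : ℝ) * ((AA m k + x ^ 2 / 2) ^ (-(m : ℤ)) * (x ^ 2 / 2)⁻¹) * (2 * (2 * x)) := rfl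
    · apply Summable.of_norm_bounded hsummand
      intro k
      have hAA := AA_nonneg m k
      have hpos : (0 : ℝ) < AA m k + x ^ 2 / 2 := by positivity
      rw [norm_zpow]
      exact zpow_neg_nat_le hpos
        ((hball x hx (x : ℂ) (Metric.mem_ball_self (by positivity))).1 k) m
  set U : Set ℂ := ⋃ x ∈ Set.Ioi (0 : ℝ), Metric.ball (x : ℂ) (x / 4) with hU
  have hUopen : IsOpen U := isOpen_biUnion fun x _ => Metric.isOpen_ball
  have hFdiff : DifferentiableOn ℂ F U := by
    intro z hz
    rw [hU] at hz
    obtain ⟨x, hx, hzball⟩ := Set.mem_iUnion₂.mp hz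
    exact (hdiff x hx z hzball).differentiableWithinAt
  have hFan : AnalyticOnNhd ℂ F U := hFdiff.analyticOnNhd hUopen
  have hmain : AnalyticOnNhd ℝ (smoothResTrace m) (Set.Ioi 0) := by
    intro x hx
    have hx0 : (0 : ℝ) < x := hx
    have hxU : (x : ℂ) ∈ U := by
      rw [hU]
      exact Set.mem_biUnion hx (Metric.mem_ball_self (by positivity))
    have h1 : AnalyticAt ℝ (fun y : ℝ => F ((y : ℝ) : ℂ)) x :=
      ((hFan (x : ℂ) hxU).restrictScalars).comp (Complex.ofRealCLM.analyticAt x)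
    have h2 : AnalyticAt ℝ (fun y : ℝ => (F ((y : ℝ) : ℂ)).re) x :=
      (Complex.reCLM.analyticAt _).comp h1
    apply h2.congr
    filter_upwards [Ioi_mem_nhds hx0] with y hy
    have hy0 : (0 : ℝ) < y := hy
    have hsm : Summable fun k : Fin m → ℤ => (AA m k + y ^ 2) ^ (-(m : ℤ)) :=
      summable_A m hm (by positivity : (0 : ℝ) < y ^ 2)
    have hterm : ∀ k : Fin m → ℤ, ((AA m k : ℂ) + ((y : ℝ) : ℂ) ^ 2) ^ (-(m : ℤ))
        = (((AA m k + y ^ 2) ^ (-(m : ℤ)) : ℝ) : ℂ) := by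
      intro k
      rw [Complex.ofReal_zpow]
      norm_cast
    calc (F ((y : ℝ) : ℂ)).re
        = ((∑' k : Fin m → ℤ, (((AA m k + y ^ 2) ^ (-(m : ℤ)) : ℝ) : ℂ))).re := by
          rw [hF]
          congr 1
          exact tsum_congr hterm
      _ = ((((∑' k : Fin m → ℤ, (AA m k + y ^ 2) ^ (-(m : ℤ)) : ℝ)) : ℂ)).re := by
          congr 1
          exact (ContinuousLinearMap.map_tsum Complex.ofRealCLM hsm).symm
      _ = smoothResTrace m y := by
          rw [Complex.ofReal_re]
          rfl
  exact hmain.contDiffOn isOpen_Ioi.uniqueDiffOn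

lemma discrete_contDiffOn (m n : ℕ) :
    ContDiffOn ℝ (⊤ : ℕ∞) (discreteResTrace m n) (Set.Ioi 0) := by
  have h : AnalyticOnNhd ℝ (discreteResTrace m n) (Set.Ioi 0) := by
    unfold discreteResTrace
    apply Finset.analyticOnNhd_fun_sum
    intro k _
    set c : ℝ := (n : ℝ) ^ 2 / π ^ 2 * ∑ i : Fin m, Real.sin (π * (k i : ℝ) / n) ^ 2 with hc
    have hc0 : 0 ≤ c :=
      mul_nonneg (div_nonneg (sq_nonneg _) (sq_nonneg _))
        (Finset.sum_nonneg fun i _ => sq_nonneg _)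
    have hbase : AnalyticOnNhd ℝ (fun z : ℝ => ((c + z ^ 2) ^ m)⁻¹) (Set.Ioi 0) := by
      apply AnalyticOnNhd.inv
      · exact (analyticOnNhd_const.add ((analyticOnNhd_id).pow 2)).pow m
      · intro z hz
        have hz0 : (0 : ℝ) < z := hz
        positivity
    exact AnalyticOnNhd.congr isOpen_Ioi hbase
      (fun z hz => by rw [← zpow_natCast (c + z ^ 2) m, ← zpow_neg])
  exact h.contDiffOn isOpen_Ioi.uniqueDiffOn

lemma limit_part (m : ℕ) (hm : 1 ≤ m) :
    ∀ (r : ℕ) (z : ℝ), 0 < z →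
      Tendsto (fun n : ℕ => iteratedDeriv r (discreteResTrace m n) z) atTop
        (nhds (iteratedDeriv r (smoothResTrace m) z)) := by
  intro r z hz
  have hπ := Real.pi_pos
  have hsum1 : ∀ c : ℝ, 0 < c →
      Summable fun k : Fin m → ℤ => (1 : ℝ) * (AA m k + c) ^ (-(m : ℤ)) := by
    intro c hc
    apply (summable_A m hm hc).congr
    intro k
    rw [one_mul]
    rfl
  have hsmooth_eq : smoothResTrace m
      = fun w => ∑' k : Fin m → ℤ, (1 : ℝ) * termE (Lrec m 0) (AA m k) w := by
    funext w
    unfold smoothResTrace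
    apply tsum_congr
    intro k
    simp [termE, Lrec, AA]
  have hRHS : iteratedDeriv r (smoothResTrace m) z
      = ∑' k : Fin m → ℤ, (1 : ℝ) * termE (Lrec m r) (AA m k) z := by
    rw [hsmooth_eq]
    exact FF_iteratedDeriv m (AA m) (fun _ => 1) (AA_nonneg m) (fun _ => Or.inr rfl)
      hsum1 r hz
  have hLHS : ∀ n : ℕ, 1 ≤ n → iteratedDeriv r (discreteResTrace m n) z
      = ∑' k : Fin m → ℤ, εN m n k * termE (Lrec m r) (aN m n k) z := by
    intro n hn
    have heq : discreteResTrace m n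
        = fun w => ∑' k : Fin m → ℤ, εN m n k * termE (Lrec m 0) (aN m n k) w := by
      funext w
      rw [key_eq m n hn w]
      apply tsum_congr
      intro k
      simp [termE, Lrec]
    rw [heq]
    exact FF_iteratedDeriv m (aN m n) (εN m n) (aN_nonneg m n) (εN_zero_or_one m n)
      (fun c hc => hsumN m n hm hn hc) r hz
  rw [hRHS]
  have hz2 : (0 : ℝ) < z ^ 2 := by positivity
  have hmain : Tendsto (fun n : ℕ => ∑' k : Fin m → ℤ, εN m n k * termE (Lrec m r) (aN m n k) z)
      atTop (nhds (∑' k : Fin m → ℤ, (1 : ℝ) * termE (Lrec m r) (AA m k) z)) := by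
    apply tendsto_tsum_of_dominated_convergence
      (bound := fun k => Cbound (Lrec m r) m z (z ^ 2)
        * ((4 / π ^ 2) ^ (-(m : ℤ)) * (AA m k + z ^ 2) ^ (-(m : ℤ))))
    · exact ((summable_A m hm hz2).mul_left _).mul_left _
    · intro k
      have h1 : Tendsto (fun n : ℕ => aN m n k) atTop (nhds (AA m k)) := by
        have heq2 : ∀ n : ℕ, aN m n k
            = ∑ i, (n : ℝ) ^ 2 / π ^ 2 * Real.sin (π * (k i : ℝ) / n) ^ 2 := by
          intro n
          unfold aN
          rw [Finset.mul_sum]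
        have h2 : Tendsto (fun n : ℕ => ∑ i, (n : ℝ) ^ 2 / π ^ 2
            * Real.sin (π * (k i : ℝ) / n) ^ 2) atTop (nhds (∑ i, ((k i : ℝ)) ^ 2)) :=
          tendsto_finset_sum _ (fun i _ => coord_tendsto (k i))
        unfold AA
        exact h2.congr (fun n => (heq2 n).symm)
      have h2 : Tendsto (fun n : ℕ => termE (Lrec m r) (aN m n k) z) atTop
          (nhds (termE (Lrec m r) (AA m k) z)) :=
        ((continuousAt_termE (Lrec m r) z
          (show 0 < AA m k + z ^ 2 by nlinarith [AA_nonneg m k])).tendsto).comp h1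
      rw [one_mul]
      apply h2.congr'
      filter_upwards [eventually_ge_atTop (2 * Finset.univ.sup (fun i => (k i).natAbs) + 1)]
        with n hn
      have hcond : ∀ i, -(n : ℤ) < 2 * k i ∧ 2 * k i ≤ n := by
        intro i
        have hB : (k i).natAbs ≤ Finset.univ.sup (fun i => (k i).natAbs) :=
          Finset.le_sup (f := fun i => (k i).natAbs) (Finset.mem_univ i)
        omega
      unfold εN
      rw [if_pos hcond, one_mul]
    · filter_upwards [eventually_ge_atTop 1] with n hn
      intro k
      have hAA := AA_nonneg m k
      have hCb : 0 ≤ Cbound (Lrec m r) m z (z ^ 2) := Cbound_nonneg _ _ hz.le hz2.le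
      rcases εN_zero_or_one m n k with h | h
      · rw [h, zero_mul, norm_zero]
        exact mul_nonneg hCb
          (mul_nonneg (zpow_nonneg (by positivity) _) (zpow_nonneg (by positivity) _))
      · rw [h, one_mul, Real.norm_eq_abs]
        have hb1 := abs_termE_le m (Lrec m r) (mem_Lrec m r) (R := z) (δ := z ^ 2)
          hz2 (aN_nonneg m n k) (le_refl (z ^ 2)) (abs_of_pos hz).le
        refine hb1.trans ?_
        apply mul_le_mul_of_nonneg_left _ hCb
        have hcond : ∀ i, -(n : ℤ) < 2 * k i ∧ 2 * k i ≤ n := by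
          by_contra hcon
          unfold εN at h
          rw [if_neg hcon] at h
          norm_num at h
        exact aN_lower m n hn k hcond hz2
  apply hmain.congr'
  filter_upwards [eventually_ge_atTop 1] with n hn
  exact (hLHS n hn).symm

end Stmt4Aux


/-- the resolvent traces `T_n` and `T` are smooth on `(0,∞)` and all
`z`-derivatives of `T_n` converge pointwise on `(0,∞)` to those of `T` as `n → ∞`. -/
theorem stmt_4 (m : ℕ) (hm : 1 ≤ m) :
    (∀ n : ℕ, 1 ≤ n → ContDiffOn ℝ (⊤ : ℕ∞) (discreteResTrace m n) (Set.Ioi 0)) ∧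
    ContDiffOn ℝ (⊤ : ℕ∞) (smoothResTrace m) (Set.Ioi 0) ∧
    (∀ (r : ℕ) (z : ℝ), 0 < z →
      Tendsto (fun n : ℕ => iteratedDeriv r (discreteResTrace m n) z) atTop
        (nhds (iteratedDeriv r (smoothResTrace m) z))) := by
  exact ⟨fun n _ => Stmt4Aux.discrete_contDiffOn m n, Stmt4Aux.smooth_contDiffOn m hm,
    Stmt4Aux.limit_part m hm⟩
end
end

section
/- Fix integers m, n ≥ 1, an integer α ≥ 1, a real z > 0, and an index j ∈ {1,…,m}. Let u : ℝ^m → ℝ be defined by u(x) = (ω(n,x) + z²)^{−α}. Then for every odd integer r ≥ 1 and every x ∈ ℝ^m whose j-th coordinate satisfies x_j = 0 or x_j = n, the r-th partial derivative of u in the j-th variable vanishes: ∂^r u/∂x_j^r (x) = 0. -/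
open Real

lemma odd_iteratedDeriv_zero_of_symm (g : ℝ → ℝ) (c : ℝ)
    (hsym : ∀ t, g (2 * c - t) = g t) (r : ℕ) (hr : Odd r) :
    iteratedDeriv r g c = 0 := by
  have h1 : iteratedDeriv r g c = iteratedDeriv r (fun t => g (2 * c - t)) c := by
    congr 1; funext t; rw [hsym]
  have h2 : iteratedDeriv r (fun t => g (2 * c - t)) c
      = (-1 : ℝ) ^ r • iteratedDeriv r (fun s => g (2 * c + s)) (-c) := by
    have := iteratedDeriv_comp_neg r (fun s => g (2 * c + s)) c
    simpa [sub_eq_add_neg] using this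
  have h3 := congrFun (iteratedDeriv_comp_const_add r g (2 * c)) (-c)
  have hc : (2 : ℝ) * c + -c = c := by ring
  rw [h2, h3, hc, hr.neg_one_pow, neg_one_smul] at h1
  linarith

/-- for `u(x) = (ω(n,x)+z²)^{−α}` with
`ω(n,x) = (n²/π²)·∑ᵢ sin²(π xᵢ/n)`, every odd-order partial derivative of `u` in the
`j`-th variable vanishes at points whose `j`-th coordinate is `0` or `n`. -/
theorem stmt_7 (m n : ℕ) (hm : 1 ≤ m) (hn : 1 ≤ n) (α : ℕ) (hα : 1 ≤ α)
    (z : ℝ) (hz : 0 < z) (j : Fin m)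
    (u : (Fin m → ℝ) → ℝ)
    (hu : ∀ x : Fin m → ℝ,
      u x = ((n : ℝ)^2 / π^2 * (∑ i : Fin m, Real.sin (π * x i / (n : ℝ))^2) + z^2)
              ^ (-(α : ℤ))) :
    ∀ r : ℕ, Odd r → ∀ x : Fin m → ℝ, (x j = 0 ∨ x j = (n : ℝ)) →
      iteratedDeriv r (fun t => u (Function.update x j t)) (x j) = 0 := by
  intro r hr x hx
  have hn0 : (n : ℝ) ≠ 0 := by positivity
  apply odd_iteratedDeriv_zero_of_symm _ (x j) _ r hr
  intro t
  rw [hu, hu]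
  have hsum : (∑ i : Fin m, Real.sin (π * Function.update x j (2 * x j - t) i / (n:ℝ))^2)
      = ∑ i : Fin m, Real.sin (π * Function.update x j t i / (n:ℝ))^2 := by
    apply Finset.sum_congr rfl
    intro i _
    rcases eq_or_ne i j with rfl | hij
    · simp only [Function.update_self]
      rcases hx with h0 | h0 <;> rw [h0]
      · have : π * (2 * 0 - t) / n = -(π * t / n) := by ring
        rw [this, Real.sin_neg]; ring
      · have e1 : π * (2 * (n : ℝ) - t) / n = 2 * π - π * t / n := by
          field_simp
        rw [e1]
        have : Real.sin (2 * π - π * t / n) = -Real.sin (π * t / n) := by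
          rw [Real.sin_sub, Real.sin_two_pi, Real.cos_two_pi]; ring
        rw [this]; ring
    · simp [Function.update_of_ne hij]
  rw [hsum]
end
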